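/- Let X have distribution F, 0 < ε < 1/2, q(ε) = 1/(2(1-ε)). Define m₁(X, c, ε) = F_{|X−c|}^{-1}(1 − q(ε)) and m₂(X, c, ε) = F_{|X−c|}^{-1}(q(ε)). Then for any distribution G on ℝ, m₁(X, Med(F(ε,G)), ε) ≤ MAD(F(ε, G)) ≤ m₂(X, Med(F(ε,G)), ε), where MAD(H) = Med(|Z − Med(H)|) for Z ∼ H. -/

import Mathlib

/-!
Let `c = Med(F(ε,G))`. Mapping by `t ↦ |t − c|` commutes with contamination, so the law `ν` of
`|Z − c|`, `Z ∼ F(ε,G)`, is the contamination `F'(ε,G')` of the laws of `|X − c|` under `F` and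
`G`. Hence `(1−ε) F'(x) ≤ ν(x) ≤ (1−ε) F'(x) + ε` for the distribution functions, and the median of
`ν`, which is the MAD, lies between the quantiles of `F'` at levels `(1/2 − ε)/(1 − ε) = 1 − q(ε)`
and `(1/2)/(1 − ε) = q(ε)`.
-/
open MeasureTheory ProbabilityTheory Filter
open scoped ENNReal

/-- ε-contamination `F(ε, G) = (1-ε)F + εG`. -/
noncomputable def mix {α : Type*} [MeasurableSpace α] (ε : ℝ) (F G : Measure α) : Measure α :=
  ENNReal.ofReal (1 - ε) • F + ENNReal.ofReal ε • G

/-- The `p`-th quantile of a measure on `ℝ`. -/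
noncomputable def quant (μ : Measure ℝ) (p : ℝ) : ℝ := sInf {x : ℝ | p ≤ cdf μ x}

/-- The median of a measure on `ℝ`. -/
noncomputable def med (μ : Measure ℝ) : ℝ := quant μ (1 / 2)

/-- The median absolute deviation: `MAD(H) = Med(|Z − Med(H)|)` for `Z ∼ H`. -/
noncomputable def mad (μ : Measure ℝ) : ℝ := med (μ.map fun t => |t - med μ|)

lemma bddBelow_setOf_le_cdf (μ : Measure ℝ) {p : ℝ} (hp : 0 < p) :
    BddBelow {x : ℝ | p ≤ cdf μ x} := by
  obtain ⟨x₀, hx₀⟩ :=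
    ((tendsto_cdf_atBot μ).eventually (eventually_lt_nhds hp)).exists_forall_of_atBot
  refine ⟨x₀, fun x hx => le_of_not_gt fun hlt => ?_⟩
  exact (hx₀ x hlt.le).not_ge hx

lemma nonempty_setOf_le_cdf (μ : Measure ℝ) {p : ℝ} (hp : p < 1) :
    {x : ℝ | p ≤ cdf μ x}.Nonempty :=
  let ⟨x₀, hx₀⟩ := ((tendsto_cdf_atTop μ).eventually (eventually_gt_nhds hp)).exists
  ⟨x₀, hx₀.le⟩

lemma quant_le_quant_of_forall {μ ν : Measure ℝ} {p q : ℝ} (hp : 0 < p) (hq : q < 1)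
    (h : ∀ x, q ≤ cdf ν x → p ≤ cdf μ x) : quant μ p ≤ quant ν q :=
  csInf_le_csInf (bddBelow_setOf_le_cdf μ hp) (nonempty_setOf_le_cdf ν hq) h

lemma map_mix {α β : Type*} [MeasurableSpace α] [MeasurableSpace β] {f : α → β}
    (hf : Measurable f) (ε : ℝ) (F G : Measure α) :
    (mix ε F G).map f = mix ε (F.map f) (G.map f) := by
  rw [mix, mix, Measure.map_add _ _ hf, Measure.map_smul, Measure.map_smul]

section Mix

variable {ε : ℝ} {F G : Measure ℝ} [IsProbabilityMeasure F] [IsProbabilityMeasure G]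

lemma isProbabilityMeasure_mix (hε₀ : 0 ≤ ε) (hε₁ : ε ≤ 1) :
    IsProbabilityMeasure (mix ε F G) := by
  constructor
  simp only [mix, Measure.add_apply, Measure.smul_apply, smul_eq_mul, measure_univ, mul_one]
  rw [← ENNReal.ofReal_add (by linarith) hε₀]
  norm_num

lemma cdf_mix (hε₀ : 0 ≤ ε) (hε₁ : ε ≤ 1) (x : ℝ) :
    cdf (mix ε F G) x = (1 - ε) * cdf F x + ε * cdf G x := by
  have := isProbabilityMeasure_mix (F := F) (G := G) hε₀ hε₁
  rw [cdf_eq_real, cdf_eq_real, cdf_eq_real]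
  simp only [measureReal_def, mix, Measure.add_apply, Measure.smul_apply, smul_eq_mul]
  rw [ENNReal.toReal_add (by finiteness) (by finiteness), ENNReal.toReal_mul,
    ENNReal.toReal_mul, ENNReal.toReal_ofReal (by linarith), ENNReal.toReal_ofReal hε₀]

lemma quant_le_quant_mix {p : ℝ} (hε₀ : 0 ≤ ε) (hεp : ε < p) (hp : p < 1) :
    quant F ((p - ε) / (1 - ε)) ≤ quant (mix ε F G) p := by
  have h1ε : 0 < 1 - ε := by linarith
  refine quant_le_quant_of_forall (div_pos (by linarith) h1ε) hp fun x hx => ?_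
  rw [cdf_mix hε₀ (by linarith)] at hx
  rw [div_le_iff₀ h1ε]
  nlinarith [cdf_le_one G x]

lemma quant_mix_le_quant {p : ℝ} (hε₀ : 0 ≤ ε) (hp₀ : 0 < p) (hp : p < 1 - ε) :
    quant (mix ε F G) p ≤ quant F (p / (1 - ε)) := by
  have h1ε : 0 < 1 - ε := by linarith
  refine quant_le_quant_of_forall hp₀ ((div_lt_one h1ε).2 hp) fun x hx => ?_
  rw [div_le_iff₀ h1ε] at hx
  rw [cdf_mix hε₀ (by linarith)]
  nlinarith [cdf_nonneg G x]

end Mix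

/-- Lemma 3.1 (L-iii):
`m₁(X, Med(F(ε,G)), ε) ≤ MAD(F(ε,G)) ≤ m₂(X, Med(F(ε,G)), ε)`,
where `mᵢ(X, c, ε)` are the quantiles of the distribution of `|X − c|` at levels
`1 − q(ε)` and `q(ε)` with `q(ε) = 1/(2(1−ε))`. -/
theorem stmt6 (F G : Measure ℝ) [IsProbabilityMeasure F] [IsProbabilityMeasure G]
    (ε : ℝ) (hε1 : 0 < ε) (hε2 : ε < 1 / 2) :
    quant (F.map fun t => |t - med (mix ε F G)|) (1 - 1 / (2 * (1 - ε)))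
        ≤ mad (mix ε F G) ∧
      mad (mix ε F G) ≤ quant (F.map fun t => |t - med (mix ε F G)|) (1 / (2 * (1 - ε))) := by
  set c := med (mix ε F G)
  have hf : Measurable fun t : ℝ => |t - c| := (measurable_id.sub_const c).abs
  have := Measure.isProbabilityMeasure_map (μ := F) hf.aemeasurable
  have := Measure.isProbabilityMeasure_map (μ := G) hf.aemeasurable
  have hmad : mad (mix ε F G)
      = quant (mix ε (F.map fun t => |t - c|) (G.map fun t => |t - c|)) (1 / 2) := by
    rw [mad, med, map_mix hf]
  have h1ε : 1 - ε ≠ 0 := by linarith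
  have hlow : 1 - 1 / (2 * (1 - ε)) = (1 / 2 - ε) / (1 - ε) := by field_simp; ring
  have hup : 1 / (2 * (1 - ε)) = 1 / 2 / (1 - ε) := by field_simp
  rw [hmad, hlow, hup]
  exact ⟨quant_le_quant_mix hε1.le hε2 (by norm_num),
    quant_mix_le_quant hε1.le (by norm_num) (by linarith)⟩
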